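/- The category algebra 𝒦, the quotient of the σ-algebra of Borel subsets of the Cantor set 2^ω by the ideal of meager Borel sets, can be embedded into P(ℕ)/fin. -/

import Mathlib

/-!
For each set `V` of a countable basis of `2^ω`, choose an ultrafilter `q_V` containing every
subset of `V` that is comeagre in `V`. Listing these ultrafilters as `(q_n)`, each one infinitely
often, `A ↦ {n | A ∈ q_n}` is a Boolean homomorphism `P(2^ω) → P(ℕ)` killing meagre sets. A
non-meagre Borel set is comeagre in some nonempty open set, hence in some basic `V`; it then lies
in `q_V` and its image is infinite. So the induced map `𝒦 → P(ℕ)/fin` is injective.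
-/

open Set MeasureTheory
open scoped ENNReal

namespace Paper

/-- `X` and `Y` agree modulo a finite set. -/
def AlmostEq {α : Type} (X Y : Set α) : Prop := (symmDiff X Y).Finite

/-- the "equal mod finite" setoid on `Set α` -/
def finSetoid (α : Type) : Setoid (Set α) where
  r X Y := (symmDiff X Y).Finite
  iseqv := by
    constructor
    · intro X; simp
    · intro X Y h; rwa [symmDiff_comm]
    · intro X Y Z h1 h2
      exact (h1.union h2).subset (symmDiff_triangle X Y Z)

/-- the quotient Boolean algebra `P(α)/fin` -/
def PFin (α : Type) : Type := Quotient (finSetoid α)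

/-- the class of `X` in `P(α)/fin` -/
def PFin.mk {α : Type} (X : Set α) : PFin α := Quotient.mk (finSetoid α) X

/-- join in `P(α)/fin` -/
def PFin.sup {α : Type} : PFin α → PFin α → PFin α :=
  Quotient.lift₂ (fun X Y => PFin.mk (X ∪ Y))
    (by
      intro X Y X' Y' hX hY
      refine Quotient.sound ?_
      have hX' : (symmDiff X X').Finite := hX
      have hY' : (symmDiff Y Y').Finite := hY
      show (symmDiff (X ∪ Y) (X' ∪ Y')).Finite
      refine (hX'.union hY').subset ?_
      intro x hx
      simp only [Set.mem_symmDiff, Set.mem_union] at hx ⊢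
      tauto)

/-- meet in `P(α)/fin` -/
def PFin.inf {α : Type} : PFin α → PFin α → PFin α :=
  Quotient.lift₂ (fun X Y => PFin.mk (X ∩ Y))
    (by
      intro X Y X' Y' hX hY
      refine Quotient.sound ?_
      have hX' : (symmDiff X X').Finite := hX
      have hY' : (symmDiff Y Y').Finite := hY
      show (symmDiff (X ∩ Y) (X' ∩ Y')).Finite
      refine (hX'.union hY').subset ?_
      intro x hx
      simp only [Set.mem_symmDiff, Set.mem_inter_iff, Set.mem_union] at hx ⊢
      tauto)

/-- complement in `P(α)/fin` -/
def PFin.compl {α : Type} : PFin α → PFin α :=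
  Quotient.lift (fun X => PFin.mk Xᶜ)
    (by
      intro X Y h
      refine Quotient.sound ?_
      have h' : (symmDiff X Y).Finite := h
      show (symmDiff Xᶜ Yᶜ).Finite
      have e : symmDiff Xᶜ Yᶜ = symmDiff X Y := by
        ext x; simp only [Set.mem_symmDiff, Set.mem_compl_iff]; tauto
      rw [e]; exact h')

/-- bottom of `P(α)/fin` -/
def PFin.bot {α : Type} : PFin α := PFin.mk (∅ : Set α)

/-- top of `P(α)/fin` -/
def PFin.top {α : Type} : PFin α := PFin.mk (Set.univ : Set α)

/-- the Cantor set `2^ω` -/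
abbrev Cant : Type := ℕ → Bool

/-- Borel subsets of the Cantor set -/
abbrev KSet : Type := {A : Set Cant // MeasurableSet A}

lemma isMeagre_union {s t : Set Cant} (hs : IsMeagre s) (ht : IsMeagre t) :
    IsMeagre (s ∪ t) := by
  rw [IsMeagre, Set.compl_union]
  exact Filter.inter_mem hs ht

/-- the "equal modulo a meager set" setoid on Borel subsets of `2^ω` -/
def meagSetoid : Setoid KSet where
  r A B := IsMeagre (symmDiff (A : Set Cant) (B : Set Cant))
  iseqv := by
    constructor
    · intro A
      simp only [symmDiff_self, Set.bot_eq_empty]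
      exact IsMeagre.empty
    · intro A B h; rwa [symmDiff_comm]
    · intro A B C h1 h2
      exact (isMeagre_union h1 h2).mono
        (symmDiff_triangle (A : Set Cant) (B : Set Cant) (C : Set Cant))

/-- the category algebra `𝒦 = Bor(2^ω)/Meager` -/
def KAlg : Type := Quotient meagSetoid

/-- the class of a Borel set in the category algebra -/
def KAlg.mk (A : KSet) : KAlg := Quotient.mk meagSetoid A

/-- join in the category algebra -/
def KAlg.sup : KAlg → KAlg → KAlg :=
  Quotient.lift₂ (fun A B : KSet => KAlg.mk ⟨(A : Set Cant) ∪ (B : Set Cant), A.2.union B.2⟩)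
    (by
      intro A B A' B' hA hB
      refine Quotient.sound ?_
      have hA' : IsMeagre (symmDiff (A : Set Cant) (A' : Set Cant)) := hA
      have hB' : IsMeagre (symmDiff (B : Set Cant) (B' : Set Cant)) := hB
      show IsMeagre (symmDiff ((A : Set Cant) ∪ (B : Set Cant)) ((A' : Set Cant) ∪ (B' : Set Cant)))
      refine (isMeagre_union hA' hB').mono ?_
      intro x hx
      simp only [Set.mem_symmDiff, Set.mem_union] at hx ⊢
      tauto)

/-- meet in the category algebra -/
def KAlg.inf : KAlg → KAlg → KAlg :=
  Quotient.lift₂ (fun A B : KSet => KAlg.mk ⟨(A : Set Cant) ∩ (B : Set Cant), A.2.inter B.2⟩)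
    (by
      intro A B A' B' hA hB
      refine Quotient.sound ?_
      have hA' : IsMeagre (symmDiff (A : Set Cant) (A' : Set Cant)) := hA
      have hB' : IsMeagre (symmDiff (B : Set Cant) (B' : Set Cant)) := hB
      show IsMeagre (symmDiff ((A : Set Cant) ∩ (B : Set Cant)) ((A' : Set Cant) ∩ (B' : Set Cant)))
      refine (isMeagre_union hA' hB').mono ?_
      intro x hx
      simp only [Set.mem_symmDiff, Set.mem_inter_iff, Set.mem_union] at hx ⊢
      tauto)

/-- complement in the category algebra -/
def KAlg.compl : KAlg → KAlg :=
  Quotient.lift (fun A : KSet => KAlg.mk ⟨(A : Set Cant)ᶜ, A.2.compl⟩)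
    (by
      intro A B h
      refine Quotient.sound ?_
      have h' : IsMeagre (symmDiff (A : Set Cant) (B : Set Cant)) := h
      show IsMeagre (symmDiff (A : Set Cant)ᶜ (B : Set Cant)ᶜ)
      have e : symmDiff (A : Set Cant)ᶜ (B : Set Cant)ᶜ = symmDiff (A : Set Cant) (B : Set Cant) := by
        ext x; simp only [Set.mem_symmDiff, Set.mem_compl_iff]; tauto
      rw [e]; exact h')

/-- bottom of the category algebra -/
def KAlg.bot : KAlg := KAlg.mk ⟨∅, MeasurableSet.empty⟩

/-- top of the category algebra -/
def KAlg.top : KAlg := KAlg.mk ⟨Set.univ, MeasurableSet.univ⟩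

/-- `φ : 𝒦 → P(ℕ)/fin` is a Boolean-algebra embedding -/
structure IsEmbeddingK (φ : KAlg → PFin ℕ) : Prop where
  injective : Function.Injective φ
  map_sup : ∀ a b, φ (KAlg.sup a b) = PFin.sup (φ a) (φ b)
  map_inf : ∀ a b, φ (KAlg.inf a b) = PFin.inf (φ a) (φ b)
  map_compl : ∀ a, φ (KAlg.compl a) = PFin.compl (φ a)
  map_bot : φ KAlg.bot = PFin.bot
  map_top : φ KAlg.top = PFin.top

open Filter TopologicalSpace Topology

def Ultrafilter.memHom {X ι : Type*} (q : ι → Ultrafilter X) :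
    BoundedLatticeHom (Set X) (Set ι) where
  toFun A := {i | A ∈ q i}
  map_sup' _ _ := Set.ext fun _ => Ultrafilter.union_mem_iff
  map_inf' _ _ := Set.ext fun _ => Filter.inter_mem_iff
  map_top' := Set.ext fun _ => iff_of_true univ_mem trivial
  map_bot' := Set.ext fun _ => iff_of_false Ultrafilter.empty_notMem id

section Residual

variable {X : Type*} [TopologicalSpace X] [BaireSpace X]

lemma neBot_residual_inf_principal {U : Set X} (hU : IsOpen U) (hne : U.Nonempty) :
    (residual X ⊓ 𝓟 U).NeBot :=
  inf_principal_neBot_iff.2 fun _ hR =>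
    ((dense_of_mem_residual hR).inter_open_nonempty U hU hne).imp fun _ hx => ⟨hx.2, hx.1⟩

noncomputable def residualUltrafilter {U : Set X} (hU : IsOpen U) (hne : U.Nonempty) :
    Ultrafilter X :=
  haveI := neBot_residual_inf_principal hU hne
  Ultrafilter.of (residual X ⊓ 𝓟 U)

lemma residualUltrafilter_le {U : Set X} (hU : IsOpen U) (hne : U.Nonempty) :
    (residualUltrafilter hU hne : Filter X) ≤ residual X ⊓ 𝓟 U :=
  haveI := neBot_residual_inf_principal hU hne
  Ultrafilter.of_le _

lemma notMem_residualUltrafilter_of_isMeagre {U A : Set X} (hU : IsOpen U) (hne : U.Nonempty)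
    (hA : IsMeagre A) : A ∉ residualUltrafilter hU hne :=
  Ultrafilter.compl_mem_iff_notMem.1 (residualUltrafilter_le hU hne (mem_inf_of_left hA))

lemma mem_residualUltrafilter_of_subset {U W C : Set X} (hU : IsOpen U) (hne : U.Nonempty)
    (hUW : U ⊆ W) (hC : C =ᵇ W) : C ∈ residualUltrafilter hU hne :=
  mem_of_superset (residualUltrafilter_le hU hne (inter_mem_inf hC (mem_principal_self U)))
    fun _ ⟨hxCW, hxU⟩ => Eq.mpr hxCW (hUW hxU)

variable (X) in
theorem exists_boundedLatticeHom_setNat [SecondCountableTopology X] [Nonempty X] :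
    ∃ f : BoundedLatticeHom (Set X) (Set ℕ), (∀ A, IsMeagre A → f A = ∅) ∧
      ∀ C, BaireMeasurableSet C → ¬ IsMeagre C → (f C).Infinite := by
  obtain ⟨b, hb_countable, hb_empty, hb⟩ := exists_countable_basis X
  have hb_nonempty {V : Set X} (hV : V ∈ b) : V.Nonempty :=
    nonempty_iff_ne_empty.2 fun h => hb_empty (h ▸ hV)
  have : Countable b := hb_countable.to_subtype
  have : Nonempty b := by
    obtain ⟨V, hV, -⟩ :=
      hb.exists_subset_of_mem_open (mem_univ (Classical.arbitrary X)) isOpen_univ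
    exact ⟨⟨V, hV⟩⟩
  obtain ⟨e, he⟩ := exists_surjective_nat b
  let q (V : b) : Ultrafilter X := residualUltrafilter (hb.isOpen V.2) (hb_nonempty V.2)
  refine ⟨Ultrafilter.memHom fun n => q (e n.unpair.1),
    fun A hA => eq_empty_of_forall_notMem fun n =>
      notMem_residualUltrafilter_of_isMeagre _ _ hA, fun C hC hC_meagre => ?_⟩
  obtain ⟨W, hW, hCW⟩ := hC.residualEq_isOpen
  obtain ⟨x, hx⟩ : W.Nonempty := nonempty_iff_ne_empty.2 fun h =>
    hC_meagre (eventuallyEq_empty.1 (h ▸ hCW))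
  obtain ⟨V, hVb, -, hVW⟩ := hb.exists_subset_of_mem_open hx hW
  obtain ⟨m, hm⟩ := he ⟨V, hVb⟩
  -- index `n` uses the basic set `e n.unpair.1`, so each basic set is used infinitely often
  refine infinite_of_injective_forall_mem (f := Nat.pair m)
    (fun _ _ h => (Nat.pair_eq_pair.1 h).2) fun k => ?_
  show C ∈ q (e (Nat.pair m k).unpair.1)
  rw [Nat.unpair_pair, hm]
  exact mem_residualUltrafilter_of_subset _ _ hVW hCW

end Residual

lemma PFin.mk_eq_mk {α : Type} {X Y : Set α} : PFin.mk X = PFin.mk Y ↔ (symmDiff X Y).Finite :=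
  Quotient.eq

def KAlg.lift (f : BoundedLatticeHom (Set Cant) (Set ℕ)) (hf : ∀ A, IsMeagre A → f A = ∅) :
    KAlg → PFin ℕ :=
  Quotient.lift (fun A : KSet => PFin.mk (f A)) fun A B h =>
    PFin.mk_eq_mk.2 (by rw [← map_symmDiff', hf _ h]; exact finite_empty)

theorem isEmbeddingK_lift (f : BoundedLatticeHom (Set Cant) (Set ℕ))
    (hf : ∀ A, IsMeagre A → f A = ∅)
    (hinf : ∀ A, MeasurableSet A → ¬ IsMeagre A → (f A).Infinite) :
    IsEmbeddingK (KAlg.lift f hf) where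
  injective := by
    rintro ⟨A⟩ ⟨B⟩ h
    refine Quotient.sound (by_contra fun hAB => hinf _ (A.2.symmDiff B.2) hAB ?_)
    rw [map_symmDiff']
    exact PFin.mk_eq_mk.1 h
  map_sup := by rintro ⟨A⟩ ⟨B⟩; exact congrArg PFin.mk (map_sup f A.1 B.1)
  map_inf := by rintro ⟨A⟩ ⟨B⟩; exact congrArg PFin.mk (map_inf f A.1 B.1)
  map_compl := by rintro ⟨A⟩; exact congrArg PFin.mk (map_compl' f A.1)
  map_bot := congrArg PFin.mk (map_bot f)
  map_top := congrArg PFin.mk (map_top f)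

/-- the category algebra `𝒦 = Bor(2^ω)/Meager` embeds into `P(ℕ)/fin`. -/
theorem category_algebra_embeds :
    ∃ φ : KAlg → PFin ℕ, IsEmbeddingK φ := by
  obtain ⟨f, hf, hinf⟩ := exists_boundedLatticeHom_setNat Cant
  exact ⟨KAlg.lift f hf, isEmbeddingK_lift f hf fun A hA => hinf A hA.baireMeasurableSet⟩

end Paper
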